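/- arXiv:1010.1278 — 2 statements merged into one kernel-verified Lean document; each statement's English description precedes it below -/
import Mathlib

section
/- Let R be a commutative noetherian local ring, A an artinian R-module, and N a noetherian (finitely generated) R-module. Then the R-module Hom_R(A, N) has finite length. -/
/-!
Common definitions: `Ext`/`Tor` as objects of `ModuleCat R`, mini-max modules,
injective hulls of the residue field, Matlis biduality, module length, and the
`m`-adic completion of a local ring.
-/

open CategoryTheory IsLocalRing TensorProduct

universe u

/-- `Ext^i_R(A, B)`, as an object of `ModuleCat R` (Mathlib's derived-functor `Ext`). -/
noncomputable def extMod (R : Type u) [CommRing R] (i : ℕ) (A B : Type u)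
    [AddCommGroup A] [Module R A] [AddCommGroup B] [Module R B] : ModuleCat.{u} R :=
  ((Ext R (ModuleCat.{u} R) i).obj (Opposite.op (ModuleCat.of R A))).obj (ModuleCat.of R B)

/-- `Tor_i^R(A, B)`, as an object of `ModuleCat R`. -/
noncomputable def torMod (R : Type u) [CommRing R] (i : ℕ) (A B : Type u)
    [AddCommGroup A] [Module R A] [AddCommGroup B] [Module R B] : ModuleCat.{u} R :=
  ((Tor (ModuleCat.{u} R) i).obj (ModuleCat.of R A)).obj (ModuleCat.of R B)

/-- An `R`-module `M` is mini-max if it has a noetherian submodule `N` such that `M/N`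
is artinian. -/
def IsMiniMax (R M : Type u) [CommRing R] [AddCommGroup M] [Module R M] : Prop :=
  ∃ N : Submodule R M, IsNoetherian R N ∧ IsArtinian R (M ⧸ N)

/-- `E` is an injective hull of the residue field `k` of the local ring `R`:
`E` is injective and is an essential extension of `k`. -/
def IsInjectiveHullOfResidueField (R E : Type u) [CommRing R] [IsLocalRing R]
    [AddCommGroup E] [Module R E] : Prop :=
  Module.Injective R E ∧
    ∃ f : ResidueField R →ₗ[R] E, Function.Injective f ∧
      ∀ S : Submodule R E, S ≠ ⊥ → S ⊓ LinearMap.range f ≠ ⊥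

/-- The Matlis biduality map `M → Hom_R(Hom_R(M, E), E)`, `x ↦ (ψ ↦ ψ x)`. -/
def matlisBidual (R M E : Type u) [CommRing R] [AddCommGroup M] [Module R M]
    [AddCommGroup E] [Module R E] : M →ₗ[R] ((M →ₗ[R] E) →ₗ[R] E) :=
  LinearMap.applyₗ

/-- `M` is Matlis reflexive (with respect to `E`): the biduality map is an isomorphism. -/
def IsMatlisReflexive (R M E : Type u) [CommRing R] [AddCommGroup M] [Module R M]
    [AddCommGroup E] [Module R E] : Prop :=
  Function.Bijective (matlisBidual R M E)

/-- The length of an `R`-module `M`, valued in `ℕ∞`: the supremum of the lengths of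
chains of submodules of `M`. -/
noncomputable def moduleLength (R M : Type u) [Semiring R] [AddCommMonoid M] [Module R M] :
    ℕ∞ :=
  (Order.krullDim (Submodule R M)).unbotD 0

/-- `inf { i ≥ 0 | Ext^i_R(K, L) ≠ 0 }`, computed in `ℕ∞` (so it is `⊤` when all the
`Ext` modules vanish).  Taking `K = R/m` gives `depth_R(L)`; taking `K = R/a` gives
`depth_R(a; L)`. -/
noncomputable def extInf (R : Type u) [CommRing R] (K L : Type u)
    [AddCommGroup K] [Module R K] [AddCommGroup L] [Module R L] : ℕ∞ :=
  sInf {n : ℕ∞ | ∃ i : ℕ, n = i ∧ Nontrivial (extMod R i K L)}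

/-- The `m`-adic completion `R̂` of the local ring `R`. -/
abbrev Rhat (R : Type u) [CommRing R] [IsLocalRing R] : Type u :=
  AdicCompletion (maximalIdeal R) R

/-!
Since `A` is artinian, the chain `m^t A` stabilizes: `D := m^t A` satisfies `m D = D`. For every
`φ : A → N` the image `φ D` is finitely generated with `m (φ D) = φ D`, so `φ D = 0` by Nakayama.
Hence `Hom_R(A, N) = Hom_R(A / D, N)`, a finitely generated module killed by `m^t`, i.e. a
finitely generated module over the artinian ring `R / m^t`, which has finite length.
-/

section

variable {R : Type*} [CommRing R]

theorem Module.IsTorsionBySet.isNoetherian_iff_isArtinian {M : Type*} [AddCommGroup M]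
    [Module R M] {I : Ideal R} [IsArtinianRing (R ⧸ I)] (h : Module.IsTorsionBySet R M I) :
    IsNoetherian R M ↔ IsArtinian R M := by
  let _ := h.module
  rw [h.semilinearMap.isNoetherian_iff_of_bijective Function.bijective_id,
    h.semilinearMap.isArtinian_iff_of_bijective Function.bijective_id]
  exact IsSemiprimaryRing.isNoetherian_iff_isArtinian

theorem Module.IsTorsionBySet.linearMap {M N : Type*} [AddCommGroup M] [Module R M]
    [AddCommGroup N] [Module R N] {s : Set R} (h : Module.IsTorsionBySet R M s) :
    Module.IsTorsionBySet R (M →ₗ[R] N) s := fun f r => by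
  ext x
  rw [LinearMap.smul_apply, ← map_smul, h, map_zero, LinearMap.zero_apply]

theorem IsArtinian.exists_pow_smul_top_le_smul (I : Ideal R) (M : Type*) [AddCommGroup M]
    [Module R M] [IsArtinian R M] :
    ∃ t : ℕ, I ^ t • (⊤ : Submodule R M) ≤ I • I ^ t • (⊤ : Submodule R M) := by
  let powSmulTop : ℕ →o (Submodule R M)ᵒᵈ :=
    ⟨fun n => OrderDual.toDual (I ^ n • ⊤), fun _ _ hij =>
      Submodule.smul_mono_left (Ideal.pow_le_pow_right hij)⟩
  obtain ⟨t, ht⟩ := IsArtinian.monotone_stabilizes powSmulTop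
  refine ⟨t, le_of_eq ?_⟩
  rw [← Submodule.smul_assoc, smul_eq_mul, ← pow_succ']
  exact congrArg OrderDual.ofDual (ht (t + 1) t.le_succ)

theorem LinearMap.le_ker_of_le_smul_of_le_jacobson_bot {M N : Type*} [AddCommGroup M]
    [Module R M] [AddCommGroup N] [Module R N] [IsNoetherian R N] {I : Ideal R}
    (hI : I ≤ (⊥ : Ideal R).jacobson) {D : Submodule R M} (hD : D ≤ I • D) (f : M →ₗ[R] N) :
    D ≤ LinearMap.ker f := by
  rw [LinearMap.le_ker_iff_map]
  refine Submodule.eq_bot_of_le_smul_of_le_jacobson_bot I _ (IsNoetherian.noetherian _) ?_ hI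
  rw [← Submodule.map_smul'']
  exact Submodule.map_mono hD

end

theorem IsLocalRing.isArtinianRing_quotient_of_maximalIdeal_pow_le {R : Type*} [CommRing R]
    [IsNoetherianRing R] [IsLocalRing R] {I : Ideal R} {n : ℕ}
    (hI : maximalIdeal R ^ n ≤ I) : IsArtinianRing (R ⧸ I) := by
  have : Ring.KrullDimLE 0 (R ⧸ I) := Ring.krullDimLE_zero_iff.mpr fun J hJ => by
    have hJ' := hJ.comap (Ideal.Quotient.mk I)
    have hmax : J.comap (Ideal.Quotient.mk I) = maximalIdeal R :=
      le_antisymm (le_maximalIdeal hJ'.ne_top) <| Ideal.IsPrime.le_of_pow_le <|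
        hI.trans (by simpa using Ideal.ker_le_comap (Ideal.Quotient.mk I) (K := J))
    exact Ideal.isMaximal_of_isIntegral_of_isMaximal_comap _ (hmax ▸ maximalIdeal.isMaximal R)
  exact IsNoetherianRing.isArtinianRing_of_krullDimLE_zero

/-- If `R` is a commutative noetherian local ring, `A` is an artinian `R`-module and `N`
is a noetherian (finitely generated) `R`-module, then `Hom_R(A, N)` has finite length. -/
theorem hom_artinian_noetherian_isFiniteLength
    (R : Type u) [CommRing R] [IsNoetherianRing R] [IsLocalRing R]
    (A N : Type u) [AddCommGroup A] [Module R A] [AddCommGroup N] [Module R N]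
    [IsArtinian R A] [Module.Finite R N] :
    IsFiniteLength R (A →ₗ[R] N) := by
  obtain ⟨t, ht⟩ := IsArtinian.exists_pow_smul_top_le_smul (maximalIdeal R) A
  set D : Submodule R A := maximalIdeal R ^ t • ⊤
  have hker (φ : A →ₗ[R] N) : D ≤ LinearMap.ker φ :=
    φ.le_ker_of_le_smul_of_le_jacobson_bot (maximalIdeal_le_jacobson _) ht
  have : IsArtinianRing (R ⧸ maximalIdeal R ^ t) :=
    isArtinianRing_quotient_of_maximalIdeal_pow_le le_rfl
  have hquot : Module.IsTorsionBySet R (A ⧸ D) (maximalIdeal R ^ t : Ideal R) :=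
    Module.isTorsionBySet_quotient_ideal_smul A _
  have : IsNoetherian R (A ⧸ D) := hquot.isNoetherian_iff_isArtinian.mpr inferInstance
  have hHom : IsFiniteLength R ((A ⧸ D) →ₗ[R] N) :=
    isFiniteLength_iff_isNoetherian_isArtinian.mpr
      ⟨inferInstance, hquot.linearMap.isNoetherian_iff_isArtinian.mp inferInstance⟩
  exact hHom.of_surjective (f := LinearMap.lcomp R N D.mkQ) fun φ =>
    ⟨D.liftQ φ (hker φ), LinearMap.ext fun _ => rfl⟩
end

section
/- Let R be a commutative noetherian local ring and let A and A' be artinian R-modules. Then the R-module A ⊗_R A' has finite length. -/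
/-!
Common definitions: `Ext`/`Tor` as objects of `ModuleCat R`, mini-max modules,
injective hulls of the residue field, Matlis biduality, module length, and the
`m`-adic completion of a local ring.
-/

open CategoryTheory IsLocalRing TensorProduct

universe u

/-!
Since `A` is artinian, the chain `mⁿA` stabilises from some `n` on, and every `y ∈ A'` is killed
by some `mᵏ` (Nakayama on the cyclic module `Ry`). For `r ∈ mⁿ` we get `r • a ∈ mⁿA = mⁿ⁺ᵏA`, so
`r • (a ⊗ y) = (r • a) ⊗ y = 0`: thus `mⁿ` kills `A ⊗ A'`, which is then `(A/mⁿA) ⊗ (A'/mⁿA')`.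
Over the artinian ring `R/mⁿ` the artinian modules `A/mⁿA`, `A'/mⁿA'` are finitely generated,
hence so is `A ⊗ A'`, and a finitely generated `R/mⁿ`-module has finite length.
-/

open Module Submodule

section

variable {R M N : Type*} [CommRing R] [AddCommGroup M] [Module R M] [AddCommGroup N] [Module R N]

theorem Ideal.IsMaximal.isArtinianRing_quotient_pow [IsNoetherianRing R] {m : Ideal R}
    (hm : m.IsMaximal) (n : ℕ) : IsArtinianRing (R ⧸ m ^ n) := by
  have : Ring.KrullDimLE 0 (R ⧸ m ^ n) :=
    Ideal.krullDimLE_zero_quotient_iff_forall_minimalPrimes_isMaximal.mpr fun J hJ => by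
      have hJ_prime : J.IsPrime := hJ.1.1
      rwa [← hm.eq_of_le hJ_prime.ne_top (hJ_prime.le_of_pow_le hJ.1.2)]
  exact IsNoetherianRing.isArtinianRing_of_krullDimLE_zero

theorem Module.IsTorsionBySet.tfae_of_isArtinianRing {I : Ideal R} [IsArtinianRing (R ⧸ I)]
    (hM : IsTorsionBySet R M I) :
    List.TFAE [Module.Finite R M, IsNoetherian R M, IsArtinian R M, IsFiniteLength R M] := by
  let _ := hM.module
  have hfin := hM.semilinearMap.finite_iff_of_bijective Function.bijective_id
  have hnoeth := hM.semilinearMap.isNoetherian_iff_of_bijective Function.bijective_id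
  have hart := hM.semilinearMap.isArtinian_iff_of_bijective Function.bijective_id
  rw [isFiniteLength_iff_isNoetherian_isArtinian, hfin, hnoeth, hart,
    ← isFiniteLength_iff_isNoetherian_isArtinian]
  exact IsArtinianRing.tfae (R ⧸ I) M

theorem IsArtinian.exists_pow_smul_top_eq [IsArtinian R M] (I : Ideal R) :
    ∃ n, ∀ k ≥ n, I ^ k • (⊤ : Submodule R M) = I ^ n • ⊤ := by
  obtain ⟨n, hn⟩ := IsArtinian.monotone_stabilizes
    ⟨fun k => OrderDual.toDual (I ^ k • (⊤ : Submodule R M)),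
      fun _ _ h => smul_mono_left (Ideal.pow_le_pow_right h)⟩
  exact ⟨n, fun k hk => (congrArg OrderDual.ofDual (hn k hk)).symm⟩

theorem IsArtinian.exists_pow_smul_top_eq_bot [IsNoetherian R M] [IsArtinian R M] {I : Ideal R}
    (hI : I ≤ Ideal.jacobson ⊥) : ∃ n, I ^ n • (⊤ : Submodule R M) = ⊥ := by
  obtain ⟨n, hn⟩ := exists_pow_smul_top_eq (M := M) I
  refine ⟨n, eq_bot_of_le_smul_of_le_jacobson_bot I _ (IsNoetherian.noetherian _) (le_of_eq ?_) hI⟩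
  calc I ^ n • ⊤ = I ^ (n + 1) • (⊤ : Submodule R M) := (hn _ n.le_succ).symm
    _ = I • I ^ n • ⊤ := by rw [pow_succ', mul_smul]

theorem IsArtinian.exists_pow_smul_eq_zero [IsNoetherianRing R] [IsArtinian R M] {I : Ideal R}
    (hI : I ≤ Ideal.jacobson ⊥) (x : M) : ∃ n, ∀ r ∈ I ^ n, r • x = 0 := by
  obtain ⟨n, hn⟩ := exists_pow_smul_top_eq_bot (M := R ∙ x) hI
  refine ⟨n, fun r hr => ?_⟩
  have : r • (⟨x, mem_span_singleton_self x⟩ : R ∙ x) ∈ I ^ n • ⊤ :=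
    smul_mem_smul hr mem_top
  simpa [hn] using this

theorem Module.IsTorsionBySet.smul_top_le_ker {P : Type*} [AddCommGroup P] [Module R P]
    {I : Ideal R} (h : IsTorsionBySet R P I) (f : M →ₗ[R] P) :
    I • (⊤ : Submodule R M) ≤ LinearMap.ker f :=
  smul_le.mpr fun r hr x _ => by rw [LinearMap.mem_ker, map_smul]; exact @h _ ⟨r, hr⟩

theorem TensorProduct.tmul_eq_zero_of_mem_smul_top {I : Ideal R} {x : M}
    (hx : x ∈ I • (⊤ : Submodule R M)) {y : N} (hy : ∀ r ∈ I, r • y = 0) :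
    x ⊗ₜ[R] y = 0 := by
  have : I • (⊤ : Submodule R M) ≤ LinearMap.ker ((TensorProduct.mk R M N).flip y) :=
    smul_le.mpr fun r hr a _ => by
      rw [LinearMap.mem_ker, LinearMap.flip_apply, mk_apply, smul_tmul, hy r hr, tmul_zero]
  exact this hx

theorem TensorProduct.isTorsionBySet_pow_of_pow_smul_top_eq {I : Ideal R} {n : ℕ}
    (hM : ∀ k ≥ n, I ^ k • (⊤ : Submodule R M) = I ^ n • ⊤)
    (hN : ∀ y : N, ∃ k, ∀ r ∈ I ^ k, r • y = 0) :
    IsTorsionBySet R (M ⊗[R] N) ↑(I ^ n) := by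
  rintro z ⟨r, hr⟩
  change r • z = 0
  induction z using TensorProduct.induction_on with
  | zero => exact smul_zero r
  | tmul x y =>
    obtain ⟨k, hk⟩ := hN y
    have hrx : r • x ∈ I ^ (n + k) • (⊤ : Submodule R M) :=
      hM _ (n.le_add_right k) ▸ smul_mem_smul hr mem_top
    rw [smul_tmul']
    exact tmul_eq_zero_of_mem_smul_top
      (smul_mono_left (Ideal.pow_le_pow_right (k.le_add_left n)) hrx) hk
  | add z w hz hw => rw [smul_add, hz, hw, add_zero]

theorem Module.IsTorsionBySet.finite_tensorProduct {I : Ideal R}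
    (h : IsTorsionBySet R (M ⊗[R] N) I) [Module.Finite R (M ⧸ I • (⊤ : Submodule R M))]
    [Module.Finite R (N ⧸ I • (⊤ : Submodule R N))] : Module.Finite R (M ⊗[R] N) := by
  have hM : LinearMap.range (map (I • (⊤ : Submodule R M)).subtype (LinearMap.id (M := N))) = ⊥ :=
    LinearMap.range_eq_bot.mpr <| TensorProduct.ext' fun x y =>
      h.smul_top_le_ker ((TensorProduct.mk R M N).flip y) x.2
  have hN : LinearMap.range (map (LinearMap.id (M := M)) (I • (⊤ : Submodule R N)).subtype) = ⊥ :=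
    LinearMap.range_eq_bot.mpr <| TensorProduct.ext' fun x y =>
      h.smul_top_le_ker (TensorProduct.mk R M N x) y.2
  exact .equiv <| quotientTensorQuotientEquiv _ _ ≪≫ₗ quotEquivOfEqBot _ (by rw [hM, hN, bot_sup_eq])

end

/-- If `R` is a commutative noetherian local ring and `A`, `A'` are artinian
`R`-modules, then `A ⊗_R A'` has finite length. -/
theorem tensor_artinian_artinian_isFiniteLength
    (R : Type u) [CommRing R] [IsNoetherianRing R] [IsLocalRing R]
    (A A' : Type u) [AddCommGroup A] [Module R A] [AddCommGroup A'] [Module R A']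
    [IsArtinian R A] [IsArtinian R A'] :
    IsFiniteLength R (A ⊗[R] A') := by
  set m := maximalIdeal R
  have hm : m ≤ Ideal.jacobson ⊥ := (jacobson_eq_maximalIdeal ⊥ bot_ne_top).ge
  obtain ⟨n, hn⟩ := IsArtinian.exists_pow_smul_top_eq (M := A) m
  have : IsArtinianRing (R ⧸ m ^ n) := (maximalIdeal.isMaximal R).isArtinianRing_quotient_pow n
  have : Module.Finite R (A ⧸ m ^ n • (⊤ : Submodule R A)) :=
    ((isTorsionBySet_quotient_ideal_smul A (m ^ n)).tfae_of_isArtinianRing.out 2 0).mp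
      (by infer_instance)
  have : Module.Finite R (A' ⧸ m ^ n • (⊤ : Submodule R A')) :=
    ((isTorsionBySet_quotient_ideal_smul A' (m ^ n)).tfae_of_isArtinianRing.out 2 0).mp
      (by infer_instance)
  have htors := isTorsionBySet_pow_of_pow_smul_top_eq hn
    (IsArtinian.exists_pow_smul_eq_zero (M := A') hm)
  exact (htors.tfae_of_isArtinianRing.out 0 3).mp htors.finite_tensorProduct
end
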